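/- arXiv:1706.00824 — 5 statements merged into one kernel-verified Lean document; each statement's English description precedes it below -/
import Mathlib

section
/- Let (Ω, P) be a probability space carrying an i.i.d. sequence ε₁, ε₂, … of standard Gaussian random variables, and define the AR(1) process X₀ = x₀ ∈ ℝ, Xₙ = μ₀ + λ₀Xₙ₋₁ + εₙ for n ≥ 1, where |λ₀| < 1. Let g(x, y) := (x − ½[y(λ₀+λ∞) + (μ₀+μ∞)])·[y(λ₀−λ∞) + (μ₀−μ∞)] be the instantaneous log-likelihood ratio between the post-change AR(1) parameters (μ₀, λ₀) and pre-change parameters (μ∞, λ∞), with |λ∞| < 1. Then (1/n)·∑_{i=1}^{n} E[g(Xᵢ, Xᵢ₋₁)] converges, as n → ∞, to K := (λ₀−λ∞)²/(2(1−λ₀²)) + ((1−λ∞)²/2)·(μ₀/(1−λ₀) − μ∞/(1−λ∞))². -/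
open MeasureTheory ProbabilityTheory Filter Topology

/-!
Write `Dₙ = (λ₀ - λ∞) Xₙ + (μ₀ - μ∞)`. Along the post-change dynamics
`g(Xₙ₊₁, Xₙ) = (Dₙ / 2 + εₙ₊₁) Dₙ`, and `εₙ₊₁` is centred and independent of `Xₙ`, so
`E g(Xₙ₊₁, Xₙ) = (Var Dₙ + (E Dₙ)²) / 2`. The mean and the variance of `Xₙ` obey affine recursions
with contraction factors `λ₀` and `λ₀²`, hence converge to `μ₀ / (1 - λ₀)` and `1 / (1 - λ₀²)`.
So the one-step expectations converge to `K`, and so do their Cesàro means.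
-/

theorem tendsto_zero_of_eq_mul_add {w e : ℕ → ℝ} {r : ℝ} (hr : |r| < 1)
    (hrec : ∀ n, w (n + 1) = r * w n + e n) (he : Tendsto e atTop (𝓝 0)) :
    Tendsto w atTop (𝓝 0) := by
  rw [Metric.tendsto_atTop]
  intro δ hδ
  have hρ : 0 < 1 - |r| := by linarith
  obtain ⟨N, hN⟩ := Metric.tendsto_atTop.mp he (δ * (1 - |r|) / 2) (by positivity)
  have hbound : ∀ k, |w (N + k)| ≤ |r| ^ k * |w N| + δ / 2 := by
    intro k
    induction k with
    | zero => simp only [add_zero, pow_zero, one_mul]; linarith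
    | succ k ih =>
      have hek : |e (N + k)| < δ * (1 - |r|) / 2 := by
        simpa [Real.dist_eq] using hN (N + k) (Nat.le_add_right N k)
      calc |w (N + (k + 1))| = |r * w (N + k) + e (N + k)| := by rw [← add_assoc, hrec]
        _ ≤ |r| * |w (N + k)| + |e (N + k)| := by rw [← abs_mul]; exact abs_add_le _ _
        _ ≤ |r| * (|r| ^ k * |w N| + δ / 2) + δ * (1 - |r|) / 2 := by gcongr
        _ = |r| ^ (k + 1) * |w N| + δ / 2 := by ring
  have hpow : Tendsto (fun k => |r| ^ k * |w N|) atTop (𝓝 0) := by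
    simpa using (tendsto_pow_atTop_nhds_zero_of_lt_one (abs_nonneg r) hr).mul_const |w N|
  obtain ⟨M, hM⟩ := Metric.tendsto_atTop.mp hpow (δ / 2) (by positivity)
  refine ⟨N + M, fun n hn => ?_⟩
  obtain ⟨k, rfl⟩ := Nat.exists_eq_add_of_le (le_of_add_le_left hn)
  have hk := hM k (by omega)
  rw [Real.dist_eq, sub_zero, abs_of_nonneg (by positivity)] at hk
  rw [Real.dist_eq, sub_zero]
  linarith [hbound k]

theorem tendsto_div_one_sub_of_eq_mul_add {u v : ℕ → ℝ} {r L : ℝ} (hr : |r| < 1)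
    (hrec : ∀ n, u (n + 1) = r * u n + v n) (hv : Tendsto v atTop (𝓝 L)) :
    Tendsto u atTop (𝓝 (L / (1 - r))) := by
  have hr1 : 1 - r ≠ 0 := by linarith [le_abs_self r]
  have hdev : Tendsto (fun n => u n - L / (1 - r)) atTop (𝓝 0) :=
    tendsto_zero_of_eq_mul_add hr (e := fun n => v n - L)
      (fun n => by rw [hrec]; field_simp; ring) (by simpa using hv.sub_const L)
  simpa using hdev.add_const (L / (1 - r))

theorem integral_half_add_mul_self_of_indepFun {Ω : Type*} [MeasurableSpace Ω] {P : Measure Ω}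
    [IsProbabilityMeasure P] {Y e : Ω → ℝ} (hY : MemLp Y 2 P) (he : MemLp e 2 P)
    (hYe : IndepFun Y e P) (he0 : P[e] = 0) (a b : ℝ) :
    ∫ ω, ((a * Y ω + b) / 2 + e ω) * (a * Y ω + b) ∂P
      = (a ^ 2 * Var[Y; P] + (a * P[Y] + b) ^ 2) / 2 := by
  set D : Ω → ℝ := fun ω => a * Y ω + b with hD_def
  have hD : MemLp D 2 P := (hY.const_mul a).add (memLp_const b)
  have hcross : ∫ ω, e ω * D ω ∂P = 0 := by
    have heD : IndepFun e D P :=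
      hYe.symm.comp measurable_id ((measurable_id.const_mul a).add_const b)
    rw [heD.integral_fun_mul_eq_mul_integral he.aestronglyMeasurable hD.aestronglyMeasurable,
      he0, zero_mul]
  have hvarD : Var[D; P] = a ^ 2 * Var[Y; P] := by
    rw [hD_def, variance_add_const (hY.aestronglyMeasurable.const_mul a), variance_const_mul]
  have hmeanD : P[D] = a * P[Y] + b := by
    rw [hD_def, integral_add ((hY.integrable one_le_two).const_mul a) (integrable_const b),
      integral_const_mul]
    simp
  have hsqD : ∫ ω, D ω ^ 2 ∂P = Var[D; P] + P[D] ^ 2 := by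
    rw [variance_eq_sub hD]; simp only [Pi.pow_apply]; ring
  calc ∫ ω, (D ω / 2 + e ω) * D ω ∂P = ∫ ω, D ω ^ 2 / 2 + e ω * D ω ∂P := by
        congr 1; ext ω; ring
    _ = (∫ ω, D ω ^ 2 ∂P) / 2 + ∫ ω, e ω * D ω ∂P := by
        have heD : Integrable (fun ω => e ω * D ω) P := he.integrable_mul hD
        rw [integral_add (hD.integrable_sq.div_const 2) heD, integral_div]
    _ = (a ^ 2 * Var[Y; P] + (a * P[Y] + b) ^ 2) / 2 := by
        rw [hcross, hsqD, hvarD, hmeanD, add_zero]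

structure IsAR1 {Ω : Type*} (X : ℕ → Ω → ℝ) (x₀ μ lam : ℝ) (ε : ℕ → Ω → ℝ) : Prop where
  zero : ∀ ω, X 0 ω = x₀
  succ : ∀ n ω, X (n + 1) ω = μ + lam * X n ω + ε (n + 1) ω

namespace IsAR1

variable {Ω : Type*} {X ε : ℕ → Ω → ℝ} {x₀ μ lam : ℝ}

theorem measurable_iSup_comap (hX : IsAR1 X x₀ μ lam ε) (n : ℕ) :
    Measurable[⨆ i ∈ Set.Iic n, MeasurableSpace.comap (ε i) inferInstance] (X n) := by
  induction n with
  | zero =>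
    rw [show X 0 = fun _ => x₀ from funext hX.zero]
    exact measurable_const
  | succ n ih =>
    rw [show X (n + 1) = fun ω => μ + lam * X n ω + ε (n + 1) ω from funext (hX.succ n)]
    refine Measurable.add (measurable_const.add (Measurable.const_mul ?_ lam)) ?_
    · exact ih.mono (biSup_mono fun i hi => le_trans hi n.le_succ) le_rfl
    · exact measurable_iff_comap_le.mpr
        (le_iSup₂ (f := fun i (_ : i ∈ Set.Iic (n + 1)) => MeasurableSpace.comap (ε i) _)
          (n + 1) Set.self_mem_Iic)

variable [MeasurableSpace Ω] {P : Measure Ω}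

theorem indepFun_noise (hX : IsAR1 X x₀ μ lam ε) (hε : ∀ n, Measurable (ε n))
    (hind : iIndepFun ε P) (n : ℕ) : IndepFun (X n) (ε (n + 1)) P := by
  have hpast_future := indep_iSup_of_disjoint (fun i => (hε i).comap_le) hind.iIndep
    (S := Set.Iic n) (T := {n + 1}) (by simp)
  rw [IndepFun_iff_Indep]
  refine indep_of_indep_of_le hpast_future
    (measurable_iff_comap_le.mp (hX.measurable_iSup_comap n)) ?_
  exact le_iSup₂ (f := fun i (_ : i ∈ ({n + 1} : Set ℕ)) => MeasurableSpace.comap (ε i) _)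
    (n + 1) rfl

theorem memLp_two [IsFiniteMeasure P] (hX : IsAR1 X x₀ μ lam ε) (hε : ∀ n, MemLp (ε n) 2 P)
    (n : ℕ) : MemLp (X n) 2 P := by
  induction n with
  | zero =>
    rw [show X 0 = fun _ => x₀ from funext hX.zero]
    exact memLp_const x₀
  | succ n ih =>
    rw [show X (n + 1) = fun ω => μ + lam * X n ω + ε (n + 1) ω from funext (hX.succ n)]
    exact ((memLp_const μ).add (ih.const_mul lam)).add (hε (n + 1))

variable [IsProbabilityMeasure P]

theorem integral_succ (hX : IsAR1 X x₀ μ lam ε) (hε : ∀ n, MemLp (ε n) 2 P)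
    (hmean : ∀ n, P[ε n] = 0) (n : ℕ) : P[X (n + 1)] = lam * P[X n] + μ := by
  have hXn := (hX.memLp_two hε n).integrable one_le_two
  simp only [hX.succ n]
  rw [integral_add ((integrable_const μ).fun_add (hXn.const_mul lam))
      ((hε _).integrable one_le_two), integral_add (integrable_const μ) (hXn.const_mul lam),
    integral_const, integral_const_mul, hmean]
  simp [add_comm]

theorem variance_succ (hX : IsAR1 X x₀ μ lam ε) (hε : ∀ n, MemLp (ε n) 2 P)
    (hεm : ∀ n, Measurable (ε n)) (hind : iIndepFun ε P) (n : ℕ) :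
    Var[X (n + 1); P] = lam ^ 2 * Var[X n; P] + Var[ε (n + 1); P] := by
  have hXn := hX.memLp_two hε n
  have hdrift : MemLp (fun ω => μ + lam * X n ω) 2 P := (memLp_const μ).add (hXn.const_mul lam)
  have hindep : IndepFun (fun ω => μ + lam * X n ω) (ε (n + 1)) P :=
    (hX.indepFun_noise hεm hind n).comp (measurable_const.add (measurable_id.const_mul lam))
      measurable_id
  rw [show X (n + 1) = fun ω => μ + lam * X n ω + ε (n + 1) ω from funext (hX.succ n),
    hindep.variance_fun_add hdrift (hε _),
    variance_const_add (hXn.aestronglyMeasurable.const_mul lam), variance_const_mul]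

theorem tendsto_integral (hX : IsAR1 X x₀ μ lam ε) (hlam : |lam| < 1)
    (hε : ∀ n, MemLp (ε n) 2 P) (hmean : ∀ n, P[ε n] = 0) :
    Tendsto (fun n => P[X n]) atTop (𝓝 (μ / (1 - lam))) :=
  tendsto_div_one_sub_of_eq_mul_add hlam (hX.integral_succ hε hmean) tendsto_const_nhds

theorem tendsto_variance (hX : IsAR1 X x₀ μ lam ε) (hlam : |lam| < 1)
    (hε : ∀ n, MemLp (ε n) 2 P) (hεm : ∀ n, Measurable (ε n)) (hind : iIndepFun ε P)
    {v : ℝ} (hvar : ∀ n, Var[ε n; P] = v) :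
    Tendsto (fun n => Var[X n; P]) atTop (𝓝 (v / (1 - lam ^ 2))) := by
  have hlam2 : |lam ^ 2| < 1 := by
    rw [abs_pow]; exact pow_lt_one₀ (abs_nonneg lam) hlam two_ne_zero
  refine tendsto_div_one_sub_of_eq_mul_add hlam2 (fun n => ?_) tendsto_const_nhds
  rw [hX.variance_succ hε hεm hind, hvar]

end IsAR1

/-- For the AR(1) process `X₀ = x₀`, `Xₙ = μ₀ + λ₀ Xₙ₋₁ + εₙ` driven by i.i.d. standard
Gaussian noise (post-change dynamics), with `|λ₀| < 1` and `|λ∞| < 1`, the Cesàro averages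
`(1/n) ∑_{i=1}^n E[g(Xᵢ, Xᵢ₋₁)]` of the expected instantaneous log-likelihood ratios
`g(x, y) = (x - ½[y(λ₀+λ∞) + (μ₀+μ∞)])·[y(λ₀-λ∞) + (μ₀-μ∞)]` converge to the
Kullback--Leibler number
`K = (λ₀-λ∞)²/(2(1-λ₀²)) + ((1-λ∞)²/2)·(μ₀/(1-λ₀) - μ∞/(1-λ∞))²`. -/
theorem ar1_kl_number
    {Ω : Type*} [MeasurableSpace Ω] {P : Measure Ω} [IsProbabilityMeasure P]
    {ε : ℕ → Ω → ℝ} (hmeas : ∀ n, Measurable (ε n))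
    (hindep : iIndepFun ε P)
    (hgauss : ∀ n, P.map (ε n) = gaussianReal 0 1)
    (x₀ μ₀ μInf lam₀ lamInf : ℝ) (hlam₀ : |lam₀| < 1) (hlamInf : |lamInf| < 1)
    (X : ℕ → Ω → ℝ)
    (hX0 : ∀ ω, X 0 ω = x₀)
    (hXrec : ∀ n ω, X (n + 1) ω = μ₀ + lam₀ * X n ω + ε (n + 1) ω)
    (g : ℝ → ℝ → ℝ)
    (hg : ∀ x y, g x y =
      (x - (y * (lam₀ + lamInf) + (μ₀ + μInf)) / 2) * (y * (lam₀ - lamInf) + (μ₀ - μInf))) :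
    Tendsto
      (fun n : ℕ => (1 / (n : ℝ)) * ∑ i ∈ Finset.range n, ∫ ω, g (X (i + 1) ω) (X i ω) ∂P)
      atTop
      (𝓝 ((lam₀ - lamInf) ^ 2 / (2 * (1 - lam₀ ^ 2)) +
        ((1 - lamInf) ^ 2 / 2) * (μ₀ / (1 - lam₀) - μInf / (1 - lamInf)) ^ 2)) := by
  have hX : IsAR1 X x₀ μ₀ lam₀ ε := ⟨hX0, hXrec⟩
  have hlaw : ∀ n, HasLaw (ε n) (gaussianReal 0 1) P := fun n =>
    ⟨(hmeas n).aemeasurable, hgauss n⟩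
  have hε : ∀ n, MemLp (ε n) 2 P := fun n =>
    (memLp_map_measure_iff aestronglyMeasurable_id (hmeas n).aemeasurable).mp
      ((hgauss n).symm ▸ memLp_id_gaussianReal 2)
  have hmean : ∀ n, P[ε n] = 0 := fun n => by
    rw [(hlaw n).integral_eq, integral_id_gaussianReal]
  have hvar : ∀ n, Var[ε n; P] = 1 := fun n => by
    rw [(hlaw n).variance_eq, variance_id_gaussianReal, NNReal.coe_one]
  have hstep : ∀ n, ∫ ω, g (X (n + 1) ω) (X n ω) ∂P = ((lam₀ - lamInf) ^ 2 * Var[X n; P]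
      + ((lam₀ - lamInf) * P[X n] + (μ₀ - μInf)) ^ 2) / 2 := fun n => by
    rw [← integral_half_add_mul_self_of_indepFun (hX.memLp_two hε n) (hε (n + 1))
      (hX.indepFun_noise hmeas hindep n) (hmean (n + 1))]
    congr 1; ext ω; rw [hg, hXrec]; ring
  have hlim : Tendsto (fun n => ∫ ω, g (X (n + 1) ω) (X n ω) ∂P) atTop
      (𝓝 ((lam₀ - lamInf) ^ 2 / (2 * (1 - lam₀ ^ 2)) +
        ((1 - lamInf) ^ 2 / 2) * (μ₀ / (1 - lam₀) - μInf / (1 - lamInf)) ^ 2)) := by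
    have hlam₀_ne : 1 - lam₀ ≠ 0 := by linarith [le_abs_self lam₀]
    have hlam₀_sq_ne : 1 - lam₀ ^ 2 ≠ 0 := by nlinarith [abs_nonneg lam₀, sq_abs lam₀]
    have hlamInf_ne : 1 - lamInf ≠ 0 := by linarith [le_abs_self lamInf]
    simp_rw [hstep]
    convert (((hX.tendsto_variance hlam₀ hε hmeas hindep hvar).const_mul _).add
      ((((hX.tendsto_integral hlam₀ hε hmean).const_mul _).add_const _).pow 2)).div_const 2
      using 2
    field_simp
    ring
  simpa only [one_div] using hlim.cesaro
end

section
/- Fix μ ∈ ℝ and λ∞ with |λ∞| < 1, and define f(λ₀) := ((λ₀−λ∞)²/(2(1−λ₀²)))·[1 + μ²·(1+λ₀)/(1−λ₀)] for λ₀ ∈ (−1, 1). Then f is strictly decreasing on (−1, λ∞], strictly increasing on [λ∞, 1), and attains its global minimum value 0 uniquely at λ₀ = λ∞. -/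
/-!
The derivative of `f` factors as `(x - λ∞) · g x` with `g > 0` on `(-1, 1)`, because
`1 - λ∞ x > 0` and `1 - λ∞ > 0` there; so `f` falls strictly to `f λ∞ = 0` and then rises
strictly, which also gives positivity away from `λ∞`.
-/

open Set

theorem strictAntiOn_Ioc_and_strictMonoOn_Ico_of_hasDerivAt {f f' : ℝ → ℝ} {a b c : ℝ}
    (hac : a < c) (hcb : c < b) (hf : ∀ x ∈ Ioo a b, HasDerivAt f (f' x) x)
    (hneg : ∀ x ∈ Ioo a c, f' x < 0) (hpos : ∀ x ∈ Ioo c b, 0 < f' x) :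
    StrictAntiOn f (Ioc a c) ∧ StrictMonoOn f (Ico c b) := by
  have hcont : ContinuousOn f (Ioo a b) := fun x hx => (hf x hx).continuousAt.continuousWithinAt
  constructor
  · refine strictAntiOn_of_hasDerivWithinAt_neg (f' := f') (convex_Ioc a c)
      (hcont.mono (Ioc_subset_Ioo_right hcb)) (fun x hx => ?_) (fun x hx => ?_) <;>
      rw [interior_Ioc] at hx
    · rw [interior_Ioc]; exact (hf x ⟨hx.1, hx.2.trans hcb⟩).hasDerivWithinAt
    · exact hneg x hx
  · refine strictMonoOn_of_hasDerivWithinAt_pos (f' := f') (convex_Ico c b)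
      (hcont.mono (Ico_subset_Ioo_left hac)) (fun x hx => ?_) (fun x hx => ?_) <;>
      rw [interior_Ico] at hx
    · rw [interior_Ico]; exact (hf x ⟨hac.trans hx.1, hx.2⟩).hasDerivWithinAt
    · exact hpos x hx

noncomputable def klEqualMeans (μ L x : ℝ) : ℝ :=
  ((x - L) ^ 2 / (2 * (1 - x ^ 2))) * (1 + μ ^ 2 * (1 + x) / (1 - x))

/-- `f = A / 2 + μ² B / 2` with `A = (x - L)² / (1 - x²)` and `B = ((x - L) / (1 - x))²`,
whose derivatives are `2 (x - L) (1 - L x) / (1 - x²)²` and `2 (x - L) (1 - L) / (1 - x)³`. -/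
theorem hasDerivAt_klEqualMeans (μ L : ℝ) {x : ℝ} (hx₁ : 1 + x ≠ 0) (hx₂ : 1 - x ≠ 0) :
    HasDerivAt (klEqualMeans μ L)
      ((x - L) * ((1 - L * x) / (1 - x ^ 2) ^ 2 + μ ^ 2 * (1 - L) / (1 - x) ^ 3)) x := by
  have hsq : 1 - x ^ 2 ≠ 0 := by
    rw [show 1 - x ^ 2 = (1 + x) * (1 - x) by ring]; exact mul_ne_zero hx₁ hx₂
  have hA : HasDerivAt (fun y : ℝ => (y - L) ^ 2 / (2 * (1 - y ^ 2)))
      ((2 * (x - L) * (2 * (1 - x ^ 2)) - (x - L) ^ 2 * (2 * -(2 * x))) /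
        (2 * (1 - x ^ 2)) ^ 2) x := by
    refine HasDerivAt.fun_div ?_ ?_ (mul_ne_zero two_ne_zero hsq)
    · simpa using ((hasDerivAt_id x).sub_const L).fun_pow 2
    · simpa using ((hasDerivAt_pow 2 x).const_sub 1).const_mul 2
  have hB : HasDerivAt (fun y : ℝ => 1 + μ ^ 2 * (1 + y) / (1 - y))
      ((μ ^ 2 * (1 - x) - μ ^ 2 * (1 + x) * -1) / (1 - x) ^ 2) x := by
    refine HasDerivAt.const_add 1 (HasDerivAt.div ?_ ?_ hx₂)
    · simpa using ((hasDerivAt_id x).const_add 1).const_mul (μ ^ 2)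
    · simpa using (hasDerivAt_id x).const_sub 1
  refine (hA.fun_mul hB).congr_deriv ?_
  field_simp
  ring

theorem klEqualMeans_deriv_factor_pos (μ : ℝ) {L x : ℝ} (hL : |L| < 1)
    (hx : x ∈ Ioo (-1 : ℝ) 1) :
    0 < (1 - L * x) / (1 - x ^ 2) ^ 2 + μ ^ 2 * (1 - L) / (1 - x) ^ 3 := by
  obtain ⟨hL₁, hL₂⟩ := abs_lt.mp hL
  obtain ⟨hx₁, hx₂⟩ := hx
  have hLx : 0 < 1 - L * x := by nlinarith
  have h1x : 0 < 1 - x := by linarith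
  have h1x2 : 0 < 1 - x ^ 2 := by nlinarith
  have h1L : 0 < 1 - L := by linarith
  positivity

/-- In the equal-means case, the Kullback--Leibler number
`f(λ₀) = ((λ₀-λ∞)²/(2(1-λ₀²)))·[1 + μ²(1+λ₀)/(1-λ₀)]`, viewed as a function of the
post-change correlation `λ₀ ∈ (-1, 1)`, is strictly decreasing on `(-1, λ∞]`, strictly
increasing on `[λ∞, 1)`, and attains its global minimum value `0` uniquely at `λ₀ = λ∞`. -/
theorem ar1_kl_equal_means_monotonicity_min
    (μ lamInf : ℝ) (hlamInf : |lamInf| < 1) :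
    StrictAntiOn
      (fun x : ℝ => ((x - lamInf) ^ 2 / (2 * (1 - x ^ 2))) * (1 + μ ^ 2 * (1 + x) / (1 - x)))
      (Set.Ioc (-1 : ℝ) lamInf) ∧
    StrictMonoOn
      (fun x : ℝ => ((x - lamInf) ^ 2 / (2 * (1 - x ^ 2))) * (1 + μ ^ 2 * (1 + x) / (1 - x)))
      (Set.Ico lamInf (1 : ℝ)) ∧
    ((lamInf - lamInf) ^ 2 / (2 * (1 - lamInf ^ 2))) *
        (1 + μ ^ 2 * (1 + lamInf) / (1 - lamInf)) = 0 ∧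
    ∀ x ∈ Set.Ioo (-1 : ℝ) 1, x ≠ lamInf →
      0 < ((x - lamInf) ^ 2 / (2 * (1 - x ^ 2))) * (1 + μ ^ 2 * (1 + x) / (1 - x)) := by
  obtain ⟨hL₁, hL₂⟩ := abs_lt.mp hlamInf
  obtain ⟨hanti, hmono⟩ : StrictAntiOn (klEqualMeans μ lamInf) (Ioc (-1) lamInf) ∧
      StrictMonoOn (klEqualMeans μ lamInf) (Ico lamInf 1) :=
    strictAntiOn_Ioc_and_strictMonoOn_Ico_of_hasDerivAt hL₁ hL₂
      (fun x hx => hasDerivAt_klEqualMeans μ lamInf (by linarith [hx.1]) (by linarith [hx.2]))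
      (fun x hx => mul_neg_of_neg_of_pos (sub_neg.mpr hx.2)
        (klEqualMeans_deriv_factor_pos μ hlamInf ⟨hx.1, hx.2.trans hL₂⟩))
      (fun x hx => mul_pos (sub_pos.mpr hx.1)
        (klEqualMeans_deriv_factor_pos μ hlamInf ⟨hL₁.trans hx.1, hx.2⟩))
  have hmin : klEqualMeans μ lamInf lamInf = 0 := by simp [klEqualMeans]
  refine ⟨hanti, hmono, hmin, fun x hx hne => ?_⟩
  rcases hne.lt_or_gt with hlt | hgt
  · exact hmin ▸ hanti ⟨hx.1, hlt.le⟩ ⟨hL₁, le_rfl⟩ hlt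
  · exact hmin ▸ hmono ⟨le_rfl, hL₂⟩ ⟨hgt.le, hx.2⟩ hgt
end

section
/- Fix μ₀ ∈ ℝ with μ₀² ≠ 1, let f(λ₀) := (1/(2(1−λ₀)))·[λ₀²/(1+λ₀) + μ₀²/(1−λ₀)] for λ₀ ∈ (−1, 1), and let λ_crit := (√(8μ₀²+1) − (2μ₀²+1))/(2(μ₀²−1)). Then λ_crit ∈ (−1, 1) and f(λ_crit) ≤ f(λ₀) for every λ₀ ∈ (−1, 1); that is, f is globally minimized over (−1, 1) at λ_crit. -/
/-!
Clearing denominators, `f(λ₀) = N(λ₀) / (2 D(λ₀))` with `N(x) = x²(1-x) + μ₀²(1+x)` and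
`D(x) = (1-x)²(1+x)`. The point `λ_crit` is the root in `(-1, 0]` of the stationarity quadratic
`(μ₀²-1)c² + (2μ₀²+1)c + μ₀² = 0`, and modulo that quadratic the cross difference factors as
`N(λ)D(c) - N(c)D(λ) = (μ₀²(1+c) + 1 - c)(λ-c)²(1-2c-λ)`,
every factor of which is nonnegative on `(-1, 1)` once `c ≤ 0`.
-/

open Set

namespace AR1

-- `m` stands for `μ₀²` throughout.
noncomputable def klInfo (m x : ℝ) : ℝ :=
  1 / (2 * (1 - x)) * (x ^ 2 / (1 + x) + m / (1 - x))

noncomputable def lamCrit (m : ℝ) : ℝ :=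
  (Real.sqrt (8 * m + 1) - (2 * m + 1)) / (2 * (m - 1))

variable {m : ℝ}

lemma lamCrit_quadratic (hm : 0 ≤ 8 * m + 1) (h1 : m ≠ 1) :
    (m - 1) * lamCrit m ^ 2 + (2 * m + 1) * lamCrit m + m = 0 := by
  have hs := Real.sq_sqrt hm
  have hd : m - 1 ≠ 0 := sub_ne_zero.mpr h1
  unfold lamCrit
  generalize Real.sqrt (8 * m + 1) = s at hs
  field_simp
  linear_combination hs

lemma lamCrit_mem_Ioc (hm : 0 ≤ m) (h1 : m ≠ 1) : lamCrit m ∈ Ioc (-1) 0 := by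
  have hs := Real.sq_sqrt (by linarith : 0 ≤ 8 * m + 1)
  have hs0 := Real.sqrt_nonneg (8 * m + 1)
  unfold lamCrit
  rcases h1.lt_or_gt with h | h
  · have hd : 2 * (m - 1) < 0 := by linarith
    refine ⟨(lt_div_iff_of_neg hd).mpr (by nlinarith), div_nonpos_of_nonneg_of_nonpos ?_ hd.le⟩
    nlinarith
  · have hd : 0 < 2 * (m - 1) := by linarith
    refine ⟨(lt_div_iff₀ hd).mpr (by nlinarith), div_nonpos_of_nonpos_of_nonneg ?_ hd.le⟩
    nlinarith

lemma klInfo_eq_div {x : ℝ} (hx : x ∈ Ioo (-1) 1) :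
    klInfo m x = (x ^ 2 * (1 - x) + m * (1 + x)) / (2 * ((1 - x) ^ 2 * (1 + x))) := by
  have h1 : 1 - x ≠ 0 := by linarith [hx.2]
  have h2 : 1 + x ≠ 0 := by linarith [hx.1]
  unfold klInfo
  field_simp

lemma cross_difference_eq {c l : ℝ} (hc : (m - 1) * c ^ 2 + (2 * m + 1) * c + m = 0) :
    (l ^ 2 * (1 - l) + m * (1 + l)) * ((1 - c) ^ 2 * (1 + c)) -
        (c ^ 2 * (1 - c) + m * (1 + c)) * ((1 - l) ^ 2 * (1 + l)) =
      (m * (1 + c) + (1 - c)) * (l - c) ^ 2 * (1 - 2 * c - l) := by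
  linear_combination (2 * (l - c) * (1 - c)) * hc

lemma klInfo_le_of_quadratic {c : ℝ} (hm : 0 ≤ m) (hc : c ∈ Ioc (-1) 0)
    (hq : (m - 1) * c ^ 2 + (2 * m + 1) * c + m = 0) {l : ℝ} (hl : l ∈ Ioo (-1) 1) :
    klInfo m c ≤ klInfo m l := by
  obtain ⟨hc₁, hc₀⟩ := hc
  obtain ⟨hl₁, hl₂⟩ := hl
  have hDc : 0 < 2 * ((1 - c) ^ 2 * (1 + c)) := by
    have : 0 < 1 - c := by linarith
    have : 0 < 1 + c := by linarith
    positivity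
  have hDl : 0 < 2 * ((1 - l) ^ 2 * (1 + l)) := by
    have : 0 < 1 - l := by linarith
    have : 0 < 1 + l := by linarith
    positivity
  rw [klInfo_eq_div ⟨hc₁, by linarith⟩, klInfo_eq_div ⟨hl₁, hl₂⟩, div_le_div_iff₀ hDc hDl]
  have hfactor : 0 ≤ (m * (1 + c) + (1 - c)) * (l - c) ^ 2 * (1 - 2 * c - l) := by
    have : 0 ≤ m * (1 + c) := mul_nonneg hm (by linarith)
    exact mul_nonneg (mul_nonneg (by linarith) (sq_nonneg _)) (by linarith)
  linarith [cross_difference_eq (l := l) hq]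

end AR1

open AR1 in
/-- In the i.i.d. pre-change case, the Kullback--Leibler number
`f(λ₀) = (1/(2(1-λ₀)))·[λ₀²/(1+λ₀) + μ₀²/(1-λ₀)]` is globally minimized over
`λ₀ ∈ (-1, 1)` at the worst-case post-change correlation
`λ_crit = (√(8μ₀²+1) - (2μ₀²+1))/(2(μ₀²-1))` (defined for `μ₀² ≠ 1`). -/
theorem ar1_lambda_crit_global_min
    (μ₀ : ℝ) (hμ : μ₀ ^ 2 ≠ 1) :
    (Real.sqrt (8 * μ₀ ^ 2 + 1) - (2 * μ₀ ^ 2 + 1)) / (2 * (μ₀ ^ 2 - 1)) ∈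
      Set.Ioo (-1 : ℝ) 1 ∧
    ∀ lam₀ ∈ Set.Ioo (-1 : ℝ) 1,
      (1 / (2 * (1 - (Real.sqrt (8 * μ₀ ^ 2 + 1) - (2 * μ₀ ^ 2 + 1)) / (2 * (μ₀ ^ 2 - 1))))) *
          (((Real.sqrt (8 * μ₀ ^ 2 + 1) - (2 * μ₀ ^ 2 + 1)) / (2 * (μ₀ ^ 2 - 1))) ^ 2 /
              (1 + (Real.sqrt (8 * μ₀ ^ 2 + 1) - (2 * μ₀ ^ 2 + 1)) / (2 * (μ₀ ^ 2 - 1))) +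
            μ₀ ^ 2 /
              (1 - (Real.sqrt (8 * μ₀ ^ 2 + 1) - (2 * μ₀ ^ 2 + 1)) / (2 * (μ₀ ^ 2 - 1)))) ≤
        (1 / (2 * (1 - lam₀))) * (lam₀ ^ 2 / (1 + lam₀) + μ₀ ^ 2 / (1 - lam₀)) := by
  have hm : 0 ≤ μ₀ ^ 2 := sq_nonneg μ₀
  have hc := lamCrit_mem_Ioc hm hμ
  have hq := lamCrit_quadratic (by linarith) hμ
  exact ⟨⟨hc.1, hc.2.trans_lt one_pos⟩, fun lam₀ hl => klInfo_le_of_quadratic hm hc hq hl⟩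
end

section
/- Fix μ₀ ∈ ℝ, let f(λ₀) := (1/(2(1−λ₀)))·[λ₀²/(1+λ₀) + μ₀²/(1−λ₀)] for λ₀ ∈ (−1, 1), and let λ_lower := max(−1, (1/2)·(1 − √((9μ₀²+1)/(μ₀²+1)))). Then for every λ₀ ∈ (−1, 1): f(λ₀) ≤ μ₀²/2 if and only if λ_lower ≤ λ₀ ≤ 0. -/
/-!
Clearing the positive denominator `2(1-λ₀)²(1+λ₀)` turns `μ₀²/2 - f(λ₀) ≥ 0` into
`λ₀ · q(λ₀) ≥ 0` for the quadratic `q(λ) = (μ₀²+1)λ² - (μ₀²+1)λ - 2μ₀²`, whose roots are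
`(1 ± s)/2` with `s = √((9μ₀²+1)/(μ₀²+1)) ∈ [1, 3]`. The upper root is at least `1`, so on
`(-1, 1)` the sign of `q(λ₀)` is that of `(1-s)/2 - λ₀`, and the condition becomes
`λ₀ (λ₀ - (1-s)/2) ≤ 0`, i.e. `(1-s)/2 ≤ λ₀ ≤ 0`. Since `s ≤ 3`, the `max` with `-1` is inactive.
-/

open Real

lemma ar1_kl_le_iid_iff {μ lam : ℝ} (hlam : lam ∈ Set.Ioo (-1 : ℝ) 1) :
    (1 / (2 * (1 - lam))) * (lam ^ 2 / (1 + lam) + μ ^ 2 / (1 - lam)) ≤ μ ^ 2 / 2 ↔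
      0 ≤ lam * ((μ ^ 2 + 1) * lam ^ 2 - (μ ^ 2 + 1) * lam - 2 * μ ^ 2) := by
  obtain ⟨hlow, hup⟩ := hlam
  have hden : 0 < 2 * (1 - lam) ^ 2 * (1 + lam) := by
    have : 0 < 1 + lam := by linarith
    have : 0 < 1 - lam := by linarith
    positivity
  have hdiff : μ ^ 2 / 2 - (1 / (2 * (1 - lam))) * (lam ^ 2 / (1 + lam) + μ ^ 2 / (1 - lam)) =
      lam * ((μ ^ 2 + 1) * lam ^ 2 - (μ ^ 2 + 1) * lam - 2 * μ ^ 2) /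
        (2 * (1 - lam) ^ 2 * (1 + lam)) := by
    have : 1 + lam ≠ 0 := by linarith
    have : 1 - lam ≠ 0 := by linarith
    field_simp
    ring
  rw [← sub_nonneg, hdiff, le_div_iff₀ hden, zero_mul]

lemma one_le_sqrt_kl_ratio (μ : ℝ) : 1 ≤ √((9 * μ ^ 2 + 1) / (μ ^ 2 + 1)) := by
  rw [one_le_sqrt, one_le_div (by positivity)]
  nlinarith [sq_nonneg μ]

lemma sqrt_kl_ratio_le_three (μ : ℝ) : √((9 * μ ^ 2 + 1) / (μ ^ 2 + 1)) ≤ 3 := by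
  rw [sqrt_le_left (by norm_num), div_le_iff₀ (by positivity)]
  linarith

lemma kl_quadratic_eq_mul_roots (μ lam : ℝ) :
    (μ ^ 2 + 1) * lam ^ 2 - (μ ^ 2 + 1) * lam - 2 * μ ^ 2 =
      (μ ^ 2 + 1) * (lam - (1 / 2) * (1 - √((9 * μ ^ 2 + 1) / (μ ^ 2 + 1)))) *
        (lam - (1 / 2) * (1 + √((9 * μ ^ 2 + 1) / (μ ^ 2 + 1)))) := by
  have hsq : (μ ^ 2 + 1) * √((9 * μ ^ 2 + 1) / (μ ^ 2 + 1)) ^ 2 = 9 * μ ^ 2 + 1 := by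
    rw [sq_sqrt (by positivity)]
    field_simp
  linear_combination (1 / 4) * hsq

lemma mul_sub_nonpos_iff_of_nonpos {r x : ℝ} (hr : r ≤ 0) :
    x * (x - r) ≤ 0 ↔ r ≤ x ∧ x ≤ 0 := by
  rw [mul_nonpos_iff]
  constructor
  · rintro (⟨hx, hxr⟩ | ⟨hx, hxr⟩) <;> constructor <;> linarith
  · rintro ⟨hrx, hx⟩
    exact Or.inr ⟨hx, by linarith⟩

/-- In the i.i.d. pre-change case, the Kullback--Leibler number
`f(λ₀) = (1/(2(1-λ₀)))·[λ₀²/(1+λ₀) + μ₀²/(1-λ₀)]` is at most the i.i.d. value `μ₀²/2`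
exactly when `λ₀` lies between `λ_lower = max(-1, (1/2)(1 - √((9μ₀²+1)/(μ₀²+1))))`
and `λ_upper = 0`. -/
theorem ar1_kl_below_iid_iff
    (μ₀ : ℝ) :
    ∀ lam₀ ∈ Set.Ioo (-1 : ℝ) 1,
      ((1 / (2 * (1 - lam₀))) * (lam₀ ^ 2 / (1 + lam₀) + μ₀ ^ 2 / (1 - lam₀)) ≤ μ₀ ^ 2 / 2 ↔
        max (-1 : ℝ) ((1 / 2) * (1 - Real.sqrt ((9 * μ₀ ^ 2 + 1) / (μ₀ ^ 2 + 1)))) ≤ lam₀ ∧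
          lam₀ ≤ 0) := by
  intro lam hlam
  have hs1 := one_le_sqrt_kl_ratio μ₀
  have hs3 := sqrt_kl_ratio_le_three μ₀
  set s := √((9 * μ₀ ^ 2 + 1) / (μ₀ ^ 2 + 1))
  have hupper : (μ₀ ^ 2 + 1) * (lam - (1 / 2) * (1 + s)) < 0 :=
    mul_neg_of_pos_of_neg (by positivity) (by linarith [hlam.2])
  rw [max_eq_right (by linarith), ar1_kl_le_iid_iff hlam, kl_quadratic_eq_mul_roots,
    ← mul_sub_nonpos_iff_of_nonpos (by linarith : (1 / 2) * (1 - s) ≤ 0),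
    show lam * ((μ₀ ^ 2 + 1) * (lam - 1 / 2 * (1 - s)) * (lam - 1 / 2 * (1 + s))) =
      -(lam * (lam - 1 / 2 * (1 - s))) * -((μ₀ ^ 2 + 1) * (lam - 1 / 2 * (1 + s))) by ring,
    mul_nonneg_iff_of_pos_right (neg_pos.2 hupper), neg_nonneg]
end

section
/- Fix μ₀ ∈ ℝ with μ₀² ≠ 1, and let λ_lower := max(−1, (1/2)·(1 − √((9μ₀²+1)/(μ₀²+1)))) and λ_crit := (√(8μ₀²+1) − (2μ₀²+1))/(2(μ₀²−1)). Then −1 < λ_lower ≤ λ_crit ≤ 0. -/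
/-!
Rationalizing the numerator gives `λ_crit = -2μ₀² / (√(8μ₀²+1) + 2μ₀² + 1)`, which is visibly
nonpositive and, since `√(8μ₀²+1) ≥ 1`, at least `-μ₀²/(μ₀²+1)`. On the other side,
`((3μ₀²+1)/(μ₀²+1))² ≤ (9μ₀²+1)/(μ₀²+1) < 9` squeezes the square root in `λ_lower` between
`(3μ₀²+1)/(μ₀²+1)` and `3`, so `-1 < λ_lower ≤ -μ₀²/(μ₀²+1)`.
-/

open Real

noncomputable section

namespace AR1

def lambdaLower (μ₀ : ℝ) : ℝ :=
  max (-1 : ℝ) ((1 / 2) * (1 - √((9 * μ₀ ^ 2 + 1) / (μ₀ ^ 2 + 1))))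

def lambdaCrit (μ₀ : ℝ) : ℝ :=
  (√(8 * μ₀ ^ 2 + 1) - (2 * μ₀ ^ 2 + 1)) / (2 * (μ₀ ^ 2 - 1))

variable (μ₀ : ℝ)

lemma sqrt_nine_mul_add_one_div_lt_three :
    √((9 * μ₀ ^ 2 + 1) / (μ₀ ^ 2 + 1)) < 3 := by
  have hpos : 0 < μ₀ ^ 2 + 1 := by positivity
  rw [sqrt_lt' (by norm_num), div_lt_iff₀ hpos]
  linarith

lemma three_mul_add_one_div_le_sqrt :
    (3 * μ₀ ^ 2 + 1) / (μ₀ ^ 2 + 1) ≤ √((9 * μ₀ ^ 2 + 1) / (μ₀ ^ 2 + 1)) := by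
  have hpos : 0 < μ₀ ^ 2 + 1 := by positivity
  rw [le_sqrt' (by positivity), div_pow, div_le_div_iff₀ (by positivity) hpos]
  nlinarith [sq_nonneg μ₀]

lemma neg_one_lt_lambdaLower : -1 < lambdaLower μ₀ :=
  lt_max_of_lt_right (by linarith [sqrt_nine_mul_add_one_div_lt_three μ₀])

lemma lambdaLower_le_neg_div : lambdaLower μ₀ ≤ -(μ₀ ^ 2) / (μ₀ ^ 2 + 1) := by
  have hpos : 0 < μ₀ ^ 2 + 1 := by positivity
  apply max_le
  · rw [le_div_iff₀ hpos]
    linarith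
  · have h := three_mul_add_one_div_le_sqrt μ₀
    calc (1 / 2) * (1 - √((9 * μ₀ ^ 2 + 1) / (μ₀ ^ 2 + 1)))
        ≤ (1 / 2) * (1 - (3 * μ₀ ^ 2 + 1) / (μ₀ ^ 2 + 1)) := by linarith
      _ = -(μ₀ ^ 2) / (μ₀ ^ 2 + 1) := by field_simp; ring

lemma lambdaCrit_eq (hμ : μ₀ ^ 2 ≠ 1) :
    lambdaCrit μ₀ = -(2 * μ₀ ^ 2) / (√(8 * μ₀ ^ 2 + 1) + 2 * μ₀ ^ 2 + 1) := by
  have hr : √(8 * μ₀ ^ 2 + 1) ^ 2 = 8 * μ₀ ^ 2 + 1 := sq_sqrt (by positivity)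
  have hden : 2 * (μ₀ ^ 2 - 1) ≠ 0 := by
    intro h; apply hμ; linarith
  rw [lambdaCrit, div_eq_div_iff hden (by positivity)]
  linear_combination hr

lemma neg_div_le_lambdaCrit (hμ : μ₀ ^ 2 ≠ 1) :
    -(μ₀ ^ 2) / (μ₀ ^ 2 + 1) ≤ lambdaCrit μ₀ := by
  have hr : 1 ≤ √(8 * μ₀ ^ 2 + 1) := one_le_sqrt.mpr (by linarith [sq_nonneg μ₀])
  rw [lambdaCrit_eq μ₀ hμ, neg_div, neg_div, neg_le_neg_iff,
    div_le_div_iff₀ (by positivity) (by positivity)]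
  nlinarith [sq_nonneg μ₀]

lemma lambdaCrit_nonpos (hμ : μ₀ ^ 2 ≠ 1) : lambdaCrit μ₀ ≤ 0 := by
  rw [lambdaCrit_eq μ₀ hμ, neg_div, neg_nonpos]
  positivity

end AR1

end

/-- The lower cut-off `λ_lower = max(-1, (1/2)(1 - √((9μ₀²+1)/(μ₀²+1))))` and the worst-case
post-change correlation `λ_crit = (√(8μ₀²+1) - (2μ₀²+1))/(2(μ₀²-1))` (for `μ₀² ≠ 1`) satisfy
`-1 < λ_lower ≤ λ_crit ≤ 0`. -/
theorem ar1_lambda_lower_le_crit_le_zero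
    (μ₀ : ℝ) (hμ : μ₀ ^ 2 ≠ 1) :
    -1 < max (-1 : ℝ) ((1 / 2) * (1 - Real.sqrt ((9 * μ₀ ^ 2 + 1) / (μ₀ ^ 2 + 1)))) ∧
    max (-1 : ℝ) ((1 / 2) * (1 - Real.sqrt ((9 * μ₀ ^ 2 + 1) / (μ₀ ^ 2 + 1)))) ≤
      (Real.sqrt (8 * μ₀ ^ 2 + 1) - (2 * μ₀ ^ 2 + 1)) / (2 * (μ₀ ^ 2 - 1)) ∧
    (Real.sqrt (8 * μ₀ ^ 2 + 1) - (2 * μ₀ ^ 2 + 1)) / (2 * (μ₀ ^ 2 - 1)) ≤ 0 := by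
  change -1 < AR1.lambdaLower μ₀ ∧ AR1.lambdaLower μ₀ ≤ AR1.lambdaCrit μ₀ ∧
    AR1.lambdaCrit μ₀ ≤ 0
  exact ⟨AR1.neg_one_lt_lambdaLower μ₀,
    (AR1.lambdaLower_le_neg_div μ₀).trans (AR1.neg_div_le_lambdaCrit μ₀ hμ),
    AR1.lambdaCrit_nonpos μ₀ hμ⟩
end
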